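/- arXiv:1707.06727 — 5 statements merged into one kernel-verified Lean document; each statement's English description precedes it below -/
import Mathlib

section
/- The collection of partial transversals of a finite set system forms the independent sets of a matroid. Precisely: given a finite set S and a finite family 𝒜 = (A_1, …, A_m) of subsets of S, there is a matroid on ground set S whose independent sets are exactly the partial transversals of 𝒜; equivalently, the collection of partial transversals is nonempty, downward closed, and satisfies the augmentation (independence exchange) property: if I and J are partial transversals with |I| < |J|, then there exists x ∈ J \ I such that I ∪ {x} is a partial transversal. -/
/-- `I` is a partial transversal of the set system `A : Fin m → Finset (Fin n)`:
there is an injection `φ` from `I` into the index set with `x ∈ A (φ x)` for all `x ∈ I`. -/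
def IsPartialTransversal {n m : ℕ} (A : Fin m → Finset (Fin n)) (I : Finset (Fin n)) : Prop :=
  ∃ φ : I → Fin m, Function.Injective φ ∧ ∀ x : I, (x : Fin n) ∈ A (φ x)

/-! By Hall's theorem, `I` is a partial transversal iff `#S ≤ #N(S)` for all `S ⊆ I`, where
`N(S)` is the set of indices of the sets meeting `S`. Call `T ⊆ I` tight if `#N(T) ≤ #T`.
As `S ↦ #N(S)` is submodular, Hall's condition on `I` makes the union of two tight subsets
tight, so a tight `T ⊆ I` of maximum size contains every tight subset of `I`. If no
`x ∈ J \ I` can be added to `I`, a violating set for `insert x I` yields a tight `T_x ⊆ I`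
with `N(x) ⊆ N(T_x) ⊆ N(T)`. Then `U = J \ (I \ T)` has `N(U) ⊆ N(T)` but
`#U ≥ #J - #I + #T > #T ≥ #N(T)`, violating Hall's condition for `J`. -/

open Finset

section Hall

variable {α β : Type*} [DecidableEq β] {t : α → Finset β} {I J : Finset α}

def SatisfiesHall (t : α → Finset β) (I : Finset α) : Prop :=
  ∀ S ⊆ I, #S ≤ #(S.biUnion t)

theorem satisfiesHall_empty : SatisfiesHall t ∅ := by
  intro S hS
  simp [subset_empty.1 hS]

theorem SatisfiesHall.mono (hJ : SatisfiesHall t J) (hIJ : I ⊆ J) : SatisfiesHall t I :=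
  fun S hS => hJ S (hS.trans hIJ)

variable [DecidableEq α]

theorem satisfiesHall_iff_exists_injective :
    SatisfiesHall t I ↔ ∃ f : I → β, Function.Injective f ∧ ∀ x : I, f x ∈ t x := by
  rw [← all_card_le_biUnion_card_iff_exists_injective]
  constructor
  · intro h s
    simpa [card_image_of_injective _ Subtype.val_injective, image_biUnion] using
      h (s.image Subtype.val) (image_subset_iff.2 fun x _ => x.2)
  · intro h S hS
    rw [← subtype_map_of_mem hS, map_eq_image]
    simpa [card_image_of_injective _ Subtype.val_injective, image_biUnion] using
      h (S.subtype (· ∈ I))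

/-- Submodularity of `S ↦ #(S.biUnion t)`. -/
theorem SatisfiesHall.card_biUnion_union_le (hI : SatisfiesHall t I) {T₁ T₂ : Finset α}
    (h₁ : T₁ ⊆ I) (c₁ : #(T₁.biUnion t) ≤ #T₁) (c₂ : #(T₂.biUnion t) ≤ #T₂) :
    #((T₁ ∪ T₂).biUnion t) ≤ #(T₁ ∪ T₂) := by
  have hinter : #(T₁ ∩ T₂) ≤ #((T₁ ∩ T₂).biUnion t) :=
    hI _ (inter_subset_left.trans h₁)
  have hsub : (T₁ ∩ T₂).biUnion t ⊆ T₁.biUnion t ∩ T₂.biUnion t :=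
    subset_inter (biUnion_subset_biUnion_of_subset_left _ inter_subset_left)
      (biUnion_subset_biUnion_of_subset_left _ inter_subset_right)
  have := card_le_card hsub
  have := card_union_add_card_inter (T₁.biUnion t) (T₂.biUnion t)
  have := card_union_add_card_inter T₁ T₂
  rw [union_biUnion]
  omega

theorem SatisfiesHall.exists_tight_of_not_insert (hI : SatisfiesHall t I) {x : α}
    (hx : ¬ SatisfiesHall t (insert x I)) :
    ∃ T ⊆ I, #(T.biUnion t) ≤ #T ∧ t x ⊆ T.biUnion t := by
  simp only [SatisfiesHall, not_forall, not_le] at hx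
  obtain ⟨S, hS, hdef⟩ := hx
  have hxS : x ∈ S := by
    by_contra hxS
    exact (hI S ((subset_insert_iff_of_notMem hxS).1 hS)).not_gt hdef
  have hTI : S.erase x ⊆ I := (erase_subset_erase x hS).trans (erase_insert_subset x I)
  have hcard : #(S.erase x) + 1 = #S := card_erase_add_one hxS
  have hN : (S.erase x).biUnion t ⊆ S.biUnion t :=
    biUnion_subset_biUnion_of_subset_left _ (erase_subset x S)
  have := hI _ hTI
  have := card_le_card hN
  have hNeq : (S.erase x).biUnion t = S.biUnion t := eq_of_subset_of_card_le hN (by omega)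
  refine ⟨S.erase x, hTI, by omega, ?_⟩
  rw [hNeq]
  exact subset_biUnion_of_mem t hxS

theorem SatisfiesHall.exists_insert (hI : SatisfiesHall t I) (hJ : SatisfiesHall t J)
    (hcard : #I < #J) : ∃ x ∈ J \ I, SatisfiesHall t (insert x I) := by
  by_contra! hnot
  obtain ⟨T, hT, hTmax⟩ := exists_max_image
    (I.powerset.filter fun T => #(T.biUnion t) ≤ #T) card ⟨∅, by simp⟩
  rw [mem_filter, mem_powerset] at hT
  obtain ⟨hTI, hTtight⟩ := hT
  have hcover : ∀ x ∈ J \ I, t x ⊆ T.biUnion t := by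
    intro x hx
    obtain ⟨Tx, hTxI, hTxtight, hxTx⟩ := hI.exists_tight_of_not_insert (hnot x hx)
    have hunion := hTmax (T ∪ Tx) (by
      rw [mem_filter, mem_powerset]
      exact ⟨union_subset hTI hTxI, hI.card_biUnion_union_le hTI hTtight hTxtight⟩)
    have hTx : Tx ⊆ T := by
      rw [eq_of_subset_of_card_le subset_union_left hunion]
      exact subset_union_right
    exact hxTx.trans (biUnion_subset_biUnion_of_subset_left _ hTx)
  have hU : (J \ (I \ T)).biUnion t ⊆ T.biUnion t := by
    refine biUnion_subset.2 fun y hy => ?_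
    rw [mem_sdiff, mem_sdiff, not_and_not_right] at hy
    by_cases hyI : y ∈ I
    · exact subset_biUnion_of_mem t (hy.2 hyI)
    · exact hcover y (mem_sdiff.2 ⟨hy.1, hyI⟩)
  have hbig : #T < #(J \ (I \ T)) := by
    have := le_card_sdiff (I \ T) J
    have := card_sdiff_of_subset hTI
    have := card_le_card hTI
    omega
  refine (?_ : #(J \ (I \ T)) ≤ #T).not_gt hbig
  calc #(J \ (I \ T)) ≤ #((J \ (I \ T)).biUnion t) := hJ _ sdiff_subset
    _ ≤ #(T.biUnion t) := card_le_card hU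
    _ ≤ #T := hTtight

/-- The transversal matroid of the set system whose `i`-th set is `{x | i ∈ t x}`. -/
def transversalMatroid (t : α → Finset β) : Matroid α :=
  (IndepMatroid.ofFinset Set.univ (SatisfiesHall t) satisfiesHall_empty
    (fun _ _ => SatisfiesHall.mono)
    (fun _ _ hI hJ hcard => by
      obtain ⟨x, hx, hins⟩ := hI.exists_insert hJ hcard
      exact ⟨x, (mem_sdiff.1 hx).1, (mem_sdiff.1 hx).2, hins⟩)
    (fun _ _ => Set.subset_univ _)).matroid

theorem transversalMatroid_ground : (transversalMatroid t).E = Set.univ := rfl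

theorem transversalMatroid_indep_coe_iff :
    (transversalMatroid t).Indep I ↔ SatisfiesHall t I := by
  rw [transversalMatroid, IndepMatroid.matroid_indep_iff, IndepMatroid.ofFinset_indep]

end Hall

theorem isPartialTransversal_iff_satisfiesHall {n m : ℕ} (A : Fin m → Finset (Fin n))
    (I : Finset (Fin n)) :
    IsPartialTransversal A I ↔ SatisfiesHall (fun x => ({i | x ∈ A i} : Finset (Fin m))) I := by
  simp [satisfiesHall_iff_exists_injective, IsPartialTransversal]

/-- The partial transversals of a finite set system form the independent sets of a matroid:
there is a matroid on the ground set whose independent sets are exactly the partial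
transversals; equivalently, the collection of partial transversals is nonempty
(contains `∅`), downward closed, and satisfies the augmentation property. -/
theorem transversal_matroid_exists (n m : ℕ) (A : Fin m → Finset (Fin n)) :
    (∃ M : Matroid (Fin n), M.E = Set.univ ∧
      ∀ I : Finset (Fin n), M.Indep ↑I ↔ IsPartialTransversal A I) ∧
    IsPartialTransversal A ∅ ∧
    (∀ I J : Finset (Fin n), IsPartialTransversal A J → I ⊆ J →
      IsPartialTransversal A I) ∧
    (∀ I J : Finset (Fin n), IsPartialTransversal A I → IsPartialTransversal A J →
      I.card < J.card → ∃ x ∈ J \ I, IsPartialTransversal A (insert x I)) := by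
  simp only [isPartialTransversal_iff_satisfiesHall]
  exact ⟨⟨transversalMatroid _, transversalMatroid_ground,
      fun _ => transversalMatroid_indep_coe_iff⟩,
    satisfiesHall_empty, fun _ _ => SatisfiesHall.mono, fun _ _ => SatisfiesHall.exists_insert⟩
end

section
/- All maximal partial transversals of a finite set system have the same cardinality. Precisely: given a finite set S and a finite family 𝒜 = (A_1, …, A_m) of subsets of S, if I and J are partial transversals of 𝒜 each of which is maximal with respect to inclusion among partial transversals, then |I| = |J|. -/
/-!
Partial transversals satisfy the matroid augmentation property. Given matchings `φ` of `I` and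
`ψ` of `J` with `|I| < |J|`, choose `φ` to agree with `ψ` at as many points as possible. Some
index `ψ y` is not used by `φ`. If `y ∉ I`, sending `y` to `ψ y` matches `I ∪ {y}`; if `y ∈ I`,
rematching `y` to `ψ y` would increase the agreement. So no partial transversal is larger than
a maximal one.
-/

open Function Finset

theorem Function.Injective.update_of_notMem_range {α β : Type*} [DecidableEq α] {f : α → β}
    (hf : Injective f) (a : α) {b : β} (hb : b ∉ Set.range f) : Injective (update f a b) := by
  intro x y hxy
  by_cases hx : x = a <;> by_cases hy : y = a
  · rw [hx, hy]
  · simp only [hx, update_self, update_of_ne hy] at hxy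
    exact absurd ⟨y, hxy.symm⟩ hb
  · simp only [hy, update_self, update_of_ne hx] at hxy
    exact absurd ⟨x, hxy⟩ hb
  · exact hf (by simpa only [update_of_ne hx, update_of_ne hy] using hxy)

section Agreement

variable {α ι : Type*} {I J : Finset α}

open Classical in
noncomputable def agreement (φ : I → ι) (ψ : J → ι) : Finset I :=
  {x | ∃ h : ↑x ∈ J, φ x = ψ ⟨x, h⟩}

theorem agreement_ssubset_update [DecidableEq α] {φ : I → ι} {ψ : J → ι} (y : I) (hyJ : ↑y ∈ J)
    (hne : φ y ≠ ψ ⟨y, hyJ⟩) : agreement φ ψ ⊂ agreement (update φ y (ψ ⟨y, hyJ⟩)) ψ := by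
  rw [Finset.ssubset_iff_of_subset]
  · refine ⟨y, ?_, ?_⟩ <;> simp [agreement, hyJ, hne]
  · intro x hx
    obtain ⟨hxJ, hx⟩ := by simpa [agreement] using hx
    have hxy : x ≠ y := by rintro rfl; exact hne hx
    simp [agreement, hxJ, update_of_ne hxy, hx]

end Agreement

namespace IsPartialTransversal

variable {n m : ℕ} {A : Fin m → Finset (Fin n)} {I J : Finset (Fin n)}

theorem insert_of_notMem_range {φ : I → Fin m} (hφ : Injective φ) (hφA : ∀ x, ↑x ∈ A (φ x))
    {y : Fin n} {j : Fin m} (hj : j ∉ Set.range φ) (hy : y ∈ A j) :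
    IsPartialTransversal A (insert y I) := by
  classical
  refine ⟨fun x => if hx : ↑x ∈ I then φ ⟨x, hx⟩ else j, ?_, ?_⟩
  · rintro ⟨x, hx⟩ ⟨x', hx'⟩ hxx'
    simp only at hxx'
    split_ifs at hxx' with hxI hxI' hxI'
    · simpa using hφ hxx'
    · exact absurd ⟨_, hxx'⟩ hj
    · exact absurd ⟨_, hxx'.symm⟩ hj
    · rw [Subtype.mk.injEq, (mem_insert.1 hx).resolve_right hxI,
        (mem_insert.1 hx').resolve_right hxI']
  · rintro ⟨x, hx⟩
    by_cases hxI : x ∈ I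
    · simpa [hxI] using hφA ⟨x, hxI⟩
    · obtain rfl : x = y := by simpa [hxI] using hx
      simpa [hxI] using hy

theorem exists_insert_of_card_lt (hI : IsPartialTransversal A I) (hJ : IsPartialTransversal A J)
    (hlt : #I < #J) : ∃ x ∈ J, x ∉ I ∧ IsPartialTransversal A (insert x I) := by
  classical
  obtain ⟨ψ, hψ, hψA⟩ := hJ
  obtain ⟨φ, hφ, hφmax⟩ := exists_max_image
    {φ : I → Fin m | Injective φ ∧ ∀ x, ↑x ∈ A (φ x)} (fun φ => #(agreement φ ψ))
    (by obtain ⟨φ, h⟩ := hI; exact ⟨φ, (mem_filter_univ _).2 h⟩)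
  obtain ⟨hφ, hφA⟩ := (mem_filter_univ _).1 hφ
  obtain ⟨j, hjψ, hjφ⟩ := exists_mem_notMem_of_card_lt_card (s := univ.image φ)
    (t := univ.image ψ) (by simpa [card_image_of_injective _ hφ, card_image_of_injective _ hψ])
  obtain ⟨y, -, rfl⟩ := mem_image.1 hjψ
  have hyφ : ψ y ∉ Set.range φ := by simpa using hjφ
  by_cases hyI : ↑y ∈ I
  · exfalso
    set φ' := update φ ⟨y, hyI⟩ (ψ y)
    have hφ' : Injective φ' ∧ ∀ x, ↑x ∈ A (φ' x) := by
      refine ⟨hφ.update_of_notMem_range _ hyφ, fun x => ?_⟩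
      by_cases hx : x = ⟨y, hyI⟩
      · subst hx; simpa [φ'] using hψA y
      · simpa [φ', update_of_ne hx] using hφA x
    have hgrow := agreement_ssubset_update (φ := φ) (ψ := ψ) ⟨y, hyI⟩ y.2
      (fun h => hyφ ⟨_, h⟩)
    exact (card_lt_card hgrow).not_ge (hφmax φ' ((mem_filter_univ _).2 hφ'))
  · exact ⟨y, y.2, hyI, insert_of_notMem_range hφ hφA hyφ (hψA y)⟩

theorem card_le_of_maximal (hI : IsPartialTransversal A I)
    (hImax : ∀ I' : Finset (Fin n), IsPartialTransversal A I' → I ⊆ I' → I = I')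
    (hJ : IsPartialTransversal A J) : #J ≤ #I := by
  by_contra! hlt
  obtain ⟨x, -, hxI, hins⟩ := exists_insert_of_card_lt hI hJ hlt
  exact hxI (hImax _ hins (subset_insert x I) ▸ mem_insert_self x I)

end IsPartialTransversal

/-- All maximal partial transversals of a finite set system have the same cardinality. -/
theorem maximal_partial_transversals_same_card (n m : ℕ) (A : Fin m → Finset (Fin n))
    (I J : Finset (Fin n))
    (hI : IsPartialTransversal A I) (hJ : IsPartialTransversal A J)
    (hImax : ∀ I' : Finset (Fin n), IsPartialTransversal A I' → I ⊆ I' → I = I')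
    (hJmax : ∀ J' : Finset (Fin n), IsPartialTransversal A J' → J ⊆ J' → J = J') :
    I.card = J.card :=
  le_antisymm (hJ.card_le_of_maximal hJmax hI) (hI.card_le_of_maximal hImax hJ)
end

section
/- (Mirsky–Perfect) Let S = {a_1, …, a_n} be a finite set and 𝒜 = (A_1, …, A_m) a family of subsets of S. Let (t_{ij}) be a family of real numbers, indexed by the pairs (i,j) with a_j ∈ A_i, that is algebraically independent over ℚ. Let X_𝒜 be the m × n real matrix whose (i,j) entry is t_{ij} if a_j ∈ A_i and 0 otherwise. Then for every subset J of {1, …, n}, the columns of X_𝒜 indexed by J are linearly independent over ℝ if and only if {a_j : j ∈ J} is a partial transversal of 𝒜. In particular, X_𝒜 represents the transversal matroid T(𝒜) over ℝ. -/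
/-!
If the columns indexed by `J` are independent, then for every `s ⊆ J` the columns in `s` live in
the coordinate space of the rows meeting `s`, so `#s` is at most the number of those rows and
Hall's theorem produces a matching. Conversely, a matching `φ` selects a square submatrix whose
diagonal lies in the pattern. Its determinant, as a polynomial in one indeterminate per
pattern entry, is nonzero, since specialising the diagonal indeterminates to `1` and the others
to `0` gives `det 1 = 1`; algebraic independence of the entries then keeps it nonzero over `ℝ`.
-/

open Finset Function

section Hall

variable {K ι σ : Type*} [Ring K] [StrongRankCondition K] [DecidableEq σ]
  {v : ι → σ → K} {T : ι → Finset σ}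

theorem LinearIndependent.card_le_card_biUnion (hv : LinearIndependent K v)
    (hT : ∀ x i, v x i ≠ 0 → i ∈ T x) (s : Finset ι) : #s ≤ #(s.biUnion T) := by
  set U := s.biUnion T
  have hextend : ExtendByZero.linearMap K (Subtype.val : U → σ) ∘ (fun (x : s) (k : U) => v x k)
      = v ∘ (↑) := by
    funext x i
    change extend Subtype.val (fun k : U => v x k) 0 i = v x i
    by_cases hi : i ∈ U
    · exact Subtype.val_injective.extend_apply (fun k : U => v x k) 0 ⟨i, hi⟩
    · have hnotin : ¬∃ k : U, (k : σ) = i := by rintro ⟨k, rfl⟩; exact hi k.2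
      refine (extend_apply' _ _ _ hnotin).trans (by_contra fun hne => ?_)
      exact hi (mem_biUnion.2 ⟨x, x.2, hT x i (Ne.symm hne)⟩)
  have hcard := (LinearIndependent.of_comp _
    (hextend ▸ hv.comp _ Subtype.val_injective)).fintype_card_le_finrank
  rwa [Module.finrank_fintype_fun_eq_card, Fintype.card_coe, Fintype.card_coe] at hcard

theorem LinearIndependent.exists_injective_mem (hv : LinearIndependent K v)
    (hT : ∀ x i, v x i ≠ 0 → i ∈ T x) : ∃ f : ι → σ, Injective f ∧ ∀ x, f x ∈ T x :=
  (all_card_le_biUnion_card_iff_exists_injective T).1 (hv.card_le_card_biUnion hT)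

end Hall

section PatternMatrix

variable {m n S : Type*} (P : m → n → Prop) [∀ i j, Decidable (P i j)]

def patternMatrix [Zero S] (x : {p : m × n // P p.1 p.2} → S) : Matrix m n S :=
  Matrix.of fun i j => if h : P i j then x ⟨(i, j), h⟩ else 0

variable {P}

theorem patternMatrix_submatrix {l k : Type*} [Zero S] (x : {p : m × n // P p.1 p.2} → S)
    (r : l → m) (c : k → n) :
    (patternMatrix P x).submatrix r c =
      patternMatrix (fun i j => P (r i) (c j)) (x ∘ Subtype.map (Prod.map r c) fun _ h => h) :=
  rfl

theorem patternMatrix_map [Zero S] {T : Type*} [Zero T] (x : {p : m × n // P p.1 p.2} → S)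
    {f : S → T} (hf : f 0 = 0) : (patternMatrix P x).map f = patternMatrix P (f ∘ x) := by
  ext i j
  by_cases h : P i j <;> simp [patternMatrix, h, hf]

end PatternMatrix

section SquarePatternMatrix

variable {m : Type*} [Fintype m] [DecidableEq m] {P : m → m → Prop} [∀ i j, Decidable (P i j)]

theorem det_patternMatrix_X_ne_zero (R : Type*) [CommRing R] [Nontrivial R] (hP : ∀ i, P i i) :
    (patternMatrix P (MvPolynomial.X : _ → MvPolynomial _ R)).det ≠ 0 := by
  let δ : {p : m × m // P p.1 p.2} → R := fun p => if p.1.1 = p.1.2 then 1 else 0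
  have hδ : patternMatrix P δ = 1 := by
    ext i j
    by_cases hij : i = j
    · subst hij; simp [patternMatrix, δ, hP]
    · by_cases h : P i j <;> simp [patternMatrix, δ, h, hij]
  intro h
  have := congrArg (MvPolynomial.aeval δ) h
  rw [AlgHom.map_det, AlgHom.mapMatrix_apply, patternMatrix_map _ (map_zero _), map_zero] at this
  simp [comp_def, hδ] at this

theorem AlgebraicIndependent.det_patternMatrix_ne_zero {R K : Type*} [CommRing R] [Nontrivial R]
    [CommRing K] [Algebra R K] {x : {p : m × m // P p.1 p.2} → K}
    (hx : AlgebraicIndependent R x) (hP : ∀ i, P i i) : (patternMatrix P x).det ≠ 0 := by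
  have hmap : (patternMatrix P (MvPolynomial.X : _ → MvPolynomial _ R)).map (MvPolynomial.aeval x)
      = patternMatrix P x := by
    simp [patternMatrix_map _ (map_zero _), comp_def]
  rw [← hmap, ← AlgHom.mapMatrix_apply, ← AlgHom.map_det]
  exact fun h => det_patternMatrix_X_ne_zero R hP (hx.eq_zero_of_aeval_eq_zero _ h)

end SquarePatternMatrix

theorem Matrix.linearIndependent_col_comp_of_det_submatrix_ne_zero {K m n ι : Type*} [Field K]
    [Fintype ι] [DecidableEq ι] (M : Matrix m n K) {r : ι → m} {c : ι → n}
    (h : (M.submatrix r c).det ≠ 0) : LinearIndependent K (M.col ∘ c) :=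
  LinearIndependent.of_comp (LinearMap.funLeft K K r) <|
    Matrix.linearIndependent_cols_iff_isUnit.2 ((Matrix.isUnit_iff_isUnit_det _).2 h.isUnit)

/-- **Mirsky–Perfect.** If the nonzero entries `t i j` (placed at the positions `(i,j)`
with `a_j ∈ A_i` of the incidence pattern) form a family of reals algebraically
independent over `ℚ`, then the resulting matrix represents the transversal matroid:
a set of its columns is linearly independent over `ℝ` iff the corresponding
ground-set elements form a partial transversal. -/
theorem mirsky_perfect (n m : ℕ) (A : Fin m → Finset (Fin n))
    (t : Fin m → Fin n → ℝ)
    (ht : AlgebraicIndependent ℚ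
      (fun p : {p : Fin m × Fin n // p.2 ∈ A p.1} => t p.1.1 p.1.2))
    (X : Matrix (Fin m) (Fin n) ℝ)
    (hX : ∀ i j, X i j = if j ∈ A i then t i j else 0)
    (J : Finset (Fin n)) :
    LinearIndependent ℝ (fun j : J => fun i : Fin m => X i j) ↔
      IsPartialTransversal A J := by
  classical
  constructor
  · intro hli
    have hsupport : ∀ (j : J) i, X i j ≠ 0 → i ∈ ({i | (j : Fin n) ∈ A i} : Finset (Fin m)) := by
      intro j i hne
      simp only [mem_filter, mem_univ, true_and]
      by_contra h
      exact hne (by rw [hX, if_neg h])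
    obtain ⟨φ, hφ, hmem⟩ := hli.exists_injective_mem hsupport
    exact ⟨φ, hφ, fun j => by simpa using hmem j⟩
  · rintro ⟨φ, hφ, hmem⟩
    have hXpat : X = patternMatrix (fun i j => j ∈ A i) fun p => t p.1.1 p.1.2 := by
      ext i j
      simp [patternMatrix, hX, dite_eq_ite]
    refine X.linearIndependent_col_comp_of_det_submatrix_ne_zero (r := φ) (c := Subtype.val) ?_
    rw [hXpat, patternMatrix_submatrix]
    exact AlgebraicIndependent.det_patternMatrix_ne_zero
      (ht.comp _ (Subtype.map_injective _ (hφ.prodMap Subtype.val_injective))) hmem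
end

section
/- (Piff–Welsh, characteristic zero case) Every transversal matroid is representable over the rational numbers. Precisely: for every finite set S = {a_1, …, a_n} and finite family 𝒜 = (A_1, …, A_m) of subsets of S, there exists an m × n matrix X with entries in ℚ such that, for every subset J of {1, …, n}, the columns of X indexed by J are linearly independent over ℚ if and only if {a_j : j ∈ J} is a partial transversal of 𝒜. -/
open MvPolynomial Finset

section GenericMatrix

variable (K : Type*) [CommRing K] {ι α : Type*} [DecidableEq α]

noncomputable def genericMatrix (A : ι → Finset α) : Matrix ι α (MvPolynomial (ι × α) K) :=
  Matrix.of fun i a => if a ∈ A i then X (i, a) else 0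

theorem det_submatrix_genericMatrix_ne_zero [Nontrivial K] {κ : Type*} [Fintype κ]
    [DecidableEq κ] {A : ι → Finset α} {φ : κ → ι} {e : κ → α} (hφ : Function.Injective φ)
    (he : Function.Injective e) (hA : ∀ k, e k ∈ A (φ k)) :
    ((genericMatrix K A).submatrix φ e).det ≠ 0 := by
  classical
  let v : ι × α → K := fun p => if p ∈ Set.range (fun k => (φ k, e k)) then 1 else 0
  have hv : ((genericMatrix K A).submatrix φ e).map (eval v) = 1 := by
    ext k l
    by_cases hkl : k = l
    · subst hkl
      simpa [genericMatrix, v, hA] using ⟨k, rfl, rfl⟩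
    · have : ∀ j, ¬(φ j = φ k ∧ e j = e l) := fun j ⟨hj, hj'⟩ =>
        hkl ((hφ hj).symm.trans (he hj'))
      simp only [Matrix.map_apply, Matrix.submatrix_apply, genericMatrix, Matrix.of_apply,
        Matrix.one_apply_ne hkl]
      split_ifs <;> simp [v, this]
  intro h
  have h1 := congrArg (eval v) h
  rw [RingHom.map_det, RingHom.mapMatrix_apply, hv, Matrix.det_one, map_zero] at h1
  exact one_ne_zero h1

end GenericMatrix

theorem MvPolynomial.exists_forall_eval_ne_zero {K σ ι : Type*} [CommRing K] [IsDomain K]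
    [Infinite K] {s : Finset ι} {p : ι → MvPolynomial σ K} (hp : ∀ i ∈ s, p i ≠ 0) :
    ∃ x : σ → K, ∀ i ∈ s, eval x (p i) ≠ 0 := by
  have hprod : ∏ i ∈ s, p i ≠ 0 := prod_ne_zero_iff.mpr hp
  obtain ⟨x, hx⟩ : ∃ x, eval x (∏ i ∈ s, p i) ≠ eval x 0 := by
    by_contra! h
    exact hprod (MvPolynomial.funext h)
  rw [map_prod, map_zero, prod_ne_zero_iff] at hx
  exact ⟨x, hx⟩

theorem exists_matrix_det_submatrix_ne_zero (K : Type*) [CommRing K] [IsDomain K] [Infinite K]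
    {ι α : Type*} [Fintype ι] [Fintype α] [DecidableEq α] (A : ι → Finset α) :
    ∃ X : Matrix ι α K, (∀ i a, a ∉ A i → X i a = 0) ∧
      ∀ (J : Finset α) (φ : J → ι), Function.Injective φ → (∀ x : J, (x : α) ∈ A (φ x)) →
        (X.submatrix φ (↑)).det ≠ 0 := by
  classical
  let minor : (Σ J : Finset α, J → ι) → MvPolynomial (ι × α) K := fun p =>
    ((genericMatrix K A).submatrix p.2 (↑)).det
  let matchings := univ.filter fun p : Σ J : Finset α, J → ι =>
    Function.Injective p.2 ∧ ∀ x : p.1, (x : α) ∈ A (p.2 x)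
  obtain ⟨x, hx⟩ := exists_forall_eval_ne_zero (s := matchings) (p := minor) fun p hp => by
    obtain ⟨hφ, hA⟩ := (mem_filter.mp hp).2
    exact det_submatrix_genericMatrix_ne_zero K hφ Subtype.val_injective hA
  refine ⟨(genericMatrix K A).map (eval x), fun i a ha => by simp [genericMatrix, ha],
    fun J φ hφ hA => ?_⟩
  have h := hx ⟨J, φ⟩ (mem_filter.mpr ⟨mem_univ _, hφ, hA⟩)
  rwa [RingHom.map_det, RingHom.mapMatrix_apply, ← Matrix.submatrix_map] at h

theorem LinearIndependent.card_le_of_forall_notMem_eq_zero {K κ α : Type*} [Field K]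
    [Fintype κ] {v : κ → α → K} (hv : LinearIndependent K v) {N : Finset α}
    (hN : ∀ k, ∀ a ∉ N, v k a = 0) : Fintype.card κ ≤ #N := by
  let restrict : (α → K) →ₗ[K] (N → K) := LinearMap.funLeft K K (↑)
  have hextend : Function.ExtendByZero.linearMap K ((↑) : N → α) ∘ restrict ∘ v = v := by
    ext k a
    by_cases ha : a ∈ N
    · exact Subtype.val_injective.extend_apply _ _ ⟨a, ha⟩
    · rw [hN k a ha]
      exact Function.extend_apply' _ _ _ fun ⟨b, hb⟩ => ha (hb ▸ b.2)
  have hli : LinearIndependent K (restrict ∘ v) :=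
    LinearIndependent.of_comp _ (hextend ▸ hv)
  simpa using hli.fintype_card_le_finrank

theorem isPartialTransversal_of_linearIndependent {K : Type*} [Field K] {n m : ℕ}
    {A : Fin m → Finset (Fin n)} {X : Matrix (Fin m) (Fin n) K}
    (hX : ∀ i j, j ∉ A i → X i j = 0) {J : Finset (Fin n)}
    (hJ : LinearIndependent K (fun j : J => fun i => X i j)) : IsPartialTransversal A J := by
  let neighbours : J → Finset (Fin m) := fun x => univ.filter fun i => (x : Fin n) ∈ A i
  suffices hall : ∀ s : Finset J, #s ≤ #(s.biUnion neighbours) by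
    obtain ⟨φ, hφ, hA⟩ := (all_card_le_biUnion_card_iff_exists_injective neighbours).mp hall
    exact ⟨φ, hφ, fun x => (mem_filter.mp (hA x)).2⟩
  intro s
  simpa using (hJ.comp ((↑) : s → J) Subtype.val_injective).card_le_of_forall_notMem_eq_zero
    (N := s.biUnion neighbours) fun y i hi =>
      hX i y fun hy => hi (mem_biUnion.mpr ⟨y, y.2, mem_filter.mpr ⟨mem_univ _, hy⟩⟩)

theorem Matrix.linearIndependent_cols_of_det_submatrix_ne_zero {K ι α κ : Type*} [CommRing K]
    [IsDomain K] [Fintype κ] [DecidableEq κ] {X : Matrix ι α K} {φ : κ → ι} {e : κ → α}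
    (h : (X.submatrix φ e).det ≠ 0) : LinearIndependent K (fun k => fun i => X i (e k)) :=
  LinearIndependent.of_comp (LinearMap.funLeft K K φ) (linearIndependent_cols_of_det_ne_zero h)

/-- **Piff–Welsh (characteristic zero case).** Every transversal matroid is
representable over the rational numbers. -/
theorem transversal_matroid_representable_rat (n m : ℕ) (A : Fin m → Finset (Fin n)) :
    ∃ X : Matrix (Fin m) (Fin n) ℚ,
      ∀ J : Finset (Fin n),
        LinearIndependent ℚ (fun j : J => fun i : Fin m => X i j) ↔
          IsPartialTransversal A J := by
  obtain ⟨X, hX, hdet⟩ := exists_matrix_det_submatrix_ne_zero ℚ A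
  refine ⟨X, fun J => ⟨isPartialTransversal_of_linearIndependent hX, ?_⟩⟩
  rintro ⟨φ, hφ, hA⟩
  exact Matrix.linearIndependent_cols_of_det_submatrix_ne_zero (hdet J φ hφ hA)
end

section
/- Linearly independent columns of the incidence matrix of a set system always correspond to a partial transversal. Precisely: let S = {a_1, …, a_n} be a finite set, 𝒜 = (A_1, …, A_m) a family of subsets of S, K a field, and X the m × n matrix over K whose (i,j) entry is 1 if a_j ∈ A_i and 0 otherwise. If J ⊆ {1, …, n} is such that the columns of X indexed by J are linearly independent over K, then {a_j : j ∈ J} is a partial transversal of 𝒜. -/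
open Finset

namespace LinearIndependent

variable {κ ι K : Type*} [Field K] {v : κ → ι → K}

theorem restrict_of_forall_notMem_eq_zero [Fintype κ] (hv : LinearIndependent K v)
    (R : Set ι) (hR : ∀ k, ∀ i ∉ R, v k i = 0) :
    LinearIndependent K (fun k (i : R) => v k i) := by
  rw [Fintype.linearIndependent_iff] at hv ⊢
  refine fun g hg => hv g (funext fun i => ?_)
  by_cases hi : i ∈ R
  · simpa using congrFun hg ⟨i, hi⟩
  · simp [hR _ i hi]

theorem card_le_card_of_forall_notMem_eq_zero [Fintype κ] (hv : LinearIndependent K v)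
    (R : Finset ι) (hR : ∀ k, ∀ i ∉ R, v k i = 0) : Fintype.card κ ≤ #R := by
  simpa using (hv.restrict_of_forall_notMem_eq_zero R hR).fintype_card_le_finrank

theorem exists_injective_apply_ne_zero [Fintype ι] (hv : LinearIndependent K v) :
    ∃ f : κ → ι, Function.Injective f ∧ ∀ k, v k (f k) ≠ 0 := by
  classical
  refine (Fintype.all_card_le_filter_rel_iff_exists_injective fun k i => v k i ≠ 0).mp
    fun s => ?_
  have hs := (hv.comp ((↑) : s → κ) Subtype.val_injective).card_le_card_of_forall_notMem_eq_zero
    {i | ∃ k ∈ s, v k i ≠ 0} fun k i hi =>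
      by_contra fun h => hi (mem_filter.2 ⟨mem_univ i, k, k.2, h⟩)
  simpa using hs

end LinearIndependent

/-- Linearly independent columns of the incidence matrix of a set system always
correspond to a partial transversal (over any field). -/
theorem linearIndependent_incidence_columns_isPartialTransversal
    (n m : ℕ) (A : Fin m → Finset (Fin n))
    (K : Type*) [Field K]
    (X : Matrix (Fin m) (Fin n) K)
    (hX : ∀ i j, X i j = if j ∈ A i then 1 else 0)
    (J : Finset (Fin n))
    (hJ : LinearIndependent K (fun j : J => fun i : Fin m => X i j)) :
    IsPartialTransversal A J := by
  obtain ⟨φ, hφ, hne⟩ := hJ.exists_injective_apply_ne_zero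
  refine ⟨φ, hφ, fun j => ?_⟩
  by_contra h
  exact hne j (by simp [hX, h])
end
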